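/- arXiv:2508.13200 — 3 statements merged into one kernel-verified Lean document; each statement's English description precedes it below -/
import Mathlib

section
/- Fix m ≥ 4 and Boolean truth values b_1,…,b_m, and suppose there is an index t with 3 ≤ t ≤ m such that b_j is false for every j < t and b_t is true. Then every assignment of the auxiliary Booleans a_1,…,a_{m−3} that satisfies all chain clauses must have a_j = true for every j with 1 ≤ j ≤ min(t−2, m−3). (Forced unit propagation in the clause-splitting chain.) -/
/-- The chain clauses of the standard clause-splitting reduction from SAT to 3-SAT,
for a clause of length `m` with literal values `b 1, …, b m` and auxiliary Booleans
`a 1, …, a (m - 3)` (all 1-indexed): the clauses are `(b 1 ∨ b 2 ∨ a 1)`,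
`(¬ a i ∨ b (i+2) ∨ a (i+1))` for `1 ≤ i ≤ m - 4`, and `(¬ a (m-3) ∨ b (m-1) ∨ b m)`. -/
def chainSat (m : ℕ) (b a : ℕ → Bool) : Prop :=
  (b 1 = true ∨ b 2 = true ∨ a 1 = true) ∧
  (∀ i, 1 ≤ i → i ≤ m - 4 → (a i = false ∨ b (i + 2) = true ∨ a (i + 1) = true)) ∧
  (a (m - 3) = false ∨ b (m - 1) = true ∨ b m = true)

/-- Forced unit propagation in the clause-splitting chain: if `b j` is false for all
`j < t` and `b t` is true (with `3 ≤ t ≤ m`), then every satisfying auxiliary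
assignment has `a j = true` for all `1 ≤ j ≤ min (t - 2) (m - 3)`. -/
theorem forced_unit_propagation (m : ℕ) (hm : 4 ≤ m) (b : ℕ → Bool) (t : ℕ)
    (ht3 : 3 ≤ t) (htm : t ≤ m)
    (hbelow : ∀ j, 1 ≤ j → j < t → b j = false) (hbt : b t = true) :
    ∀ a : ℕ → Bool, chainSat m b a →
      ∀ j, 1 ≤ j → j ≤ min (t - 2) (m - 3) → a j = true := by
  intro a ⟨h1, h2, _⟩ j hj1 hjle
  induction j with
  | zero => omega
  | succ n ih =>
    rcases Nat.eq_or_lt_of_le hj1 with h | h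
    · -- n+1 = 1, i.e. n = 0
      have hn : n = 0 := by omega
      subst hn
      have hb1 : b 1 = false := hbelow 1 le_rfl (by omega)
      have hb2 : b 2 = false := hbelow 2 (by omega) (by omega)
      rcases h1 with h | h | h
      · rw [hb1] at h; exact absurd h (by simp)
      · rw [hb2] at h; exact absurd h (by simp)
      · exact h
    · -- n ≥ 1
      have hn1 : 1 ≤ n := by omega
      have han : a n = true := ih hn1 (by omega)
      have hb : b (n + 2) = false := hbelow (n + 2) (by omega) (by omega)
      rcases h2 n hn1 (by omega) with h | h | h
      · rw [han] at h; exact absurd h (by simp)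
      · rw [hb] at h; exact absurd h (by simp)
      · exact h
end

section
/- Let n ≥ 3, let 0 ≤ k ≤ n, fix an axis-aligned k-subcube C of {0,1}^n, and let m 3-clauses on n variables be drawn independently and uniformly at random. Then the probability that every vertex of C satisfies all m clauses equals (1 − q_{k,n})^m. -/
attribute [local instance] Classical.propDecidable

/-- An axis-aligned subcube of `{0,1}^n`: `none` marks a free coordinate,
`some b` a coordinate fixed to bit `b`. -/
def freeCount {n : ℕ} (f : Fin n → Option Bool) : ℕ :=
  (Finset.univ.filter fun i => f i = none).card

/-- `x` is a vertex of the subcube `f`: `x` agrees with the fixed bits of `f`. -/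
def isVertex {n : ℕ} (f : Fin n → Option Bool) (x : Fin n → Bool) : Prop :=
  ∀ i, f i = none ∨ f i = some (x i)

/-- A 3-clause on `n` variables: a 3-element set of variable indices together with
the (unique) falsifying bit pattern on those variables (all three literals false). -/
abbrev Clause3 (n : ℕ) :=
  (s : {s : Finset (Fin n) // s.card = 3}) × ({ i : Fin n // i ∈ s.val } → Bool)

/-- `x` falsifies the clause `c` iff it agrees with the falsifying pattern of `c`
on all three variables of `c`. -/
def falsifies {n : ℕ} (x : Fin n → Bool) (c : Clause3 n) : Prop :=
  ∀ i : { i : Fin n // i ∈ c.1.val }, x i.val = c.2 i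

/-- `q_{k,n} = (Σ_{t=0}^{3} C(n−k,t)·C(k,3−t)·2^{−t}) / C(n,3)`. -/
noncomputable def qkn (n k : ℕ) : ℝ :=
  (∑ t ∈ Finset.range 4,
      (Nat.choose (n - k) t : ℝ) * (Nat.choose k (3 - t) : ℝ) * (2 : ℝ)⁻¹ ^ t) /
    (Nat.choose n 3 : ℝ)

open Finset

def badC {n : ℕ} (f : Fin n → Option Bool) (c : Clause3 n) : Prop :=
  ∀ i : { i : Fin n // i ∈ c.1.val }, f i.val = none ∨ f i.val = some (c.2 i)

lemma bad_iff {n : ℕ} (f : Fin n → Option Bool) (c : Clause3 n) :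
    (∃ x, isVertex f x ∧ falsifies x c) ↔ badC f c := by
  constructor
  · rintro ⟨x, hv, hfal⟩ i
    rcases hv i.val with h | h
    · exact Or.inl h
    · exact Or.inr (by rw [h, hfal i])
  · intro hb
    refine ⟨fun i => (f i).getD (if h : i ∈ c.1.val then c.2 ⟨i, h⟩ else false), ?_, ?_⟩
    · intro i
      cases h : f i with
      | none => exact Or.inl rfl
      | some b => exact Or.inr (by simp [h])
    · intro i
      rcases hb i with h | h
      · simp [h, i.2]
      · simp [h]

lemma card_patterns {n : ℕ} (f : Fin n → Option Bool) (s : Finset (Fin n)) :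
    (univ.filter fun b : {i : Fin n // i ∈ s} → Bool =>
        ∀ i : {i : Fin n // i ∈ s}, f i.val = none ∨ f i.val = some (b i)).card
      = 2 ^ (s.filter fun i => f i = none).card := by
  have h1 : (univ.filter fun b : {i : Fin n // i ∈ s} → Bool =>
        ∀ i, f i.val = none ∨ f i.val = some (b i))
      = Fintype.piFinset (fun i : {i : Fin n // i ∈ s} =>
          univ.filter fun bit => f i.val = none ∨ f i.val = some bit) := by
    ext b; simp [Fintype.mem_piFinset]
  rw [h1, Fintype.card_piFinset]
  have h2 : ∀ i : {i : Fin n // i ∈ s},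
      (univ.filter fun bit => f i.val = none ∨ f i.val = some bit).card
        = if f i.val = none then 2 else 1 := by
    intro i
    cases h : f i.val with
    | none => simp [h]
    | some b =>
      rw [if_neg (by simp)]
      simp only [reduceCtorEq, Option.some.injEq, false_or]
      simp [Finset.filter_eq]
  rw [Finset.prod_congr rfl fun i _ => h2 i]
  rw [← Finset.prod_subtype s (fun x => Iff.rfl) (fun i => if f i = none then 2 else 1)]
  rw [Finset.prod_ite, Finset.prod_const, Finset.prod_const, one_pow, mul_one]

lemma card_fiber {n : ℕ} (p : Fin n → Prop) (j : ℕ) (hj : j ≤ 3) :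
    ((powersetCard 3 (univ : Finset (Fin n))).filter
        fun s => (s.filter p).card = j).card
      = (univ.filter p).card.choose j
          * (n - (univ.filter p).card).choose (3 - j) := by
  have key : ((powersetCard 3 (univ : Finset (Fin n))).filter
        fun s => (s.filter p).card = j).card
      = ((powersetCard j (univ.filter p)) ×ˢ
          (powersetCard (3 - j) (univ.filter p)ᶜ)).card := by
    refine Finset.card_bij' (fun s _ => (s.filter p, s.filter fun i => ¬ p i))
      (fun q _ => q.1 ∪ q.2) ?_ ?_ ?_ ?_
    · intro s hs
      simp only [mem_filter, mem_powersetCard_univ] at hs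
      simp only [mem_product, mem_powersetCard]
      refine ⟨⟨fun i hi => ?_, hs.2⟩, fun i hi => ?_, ?_⟩
      · simp only [mem_filter] at hi ⊢; exact ⟨mem_univ _, hi.2⟩
      · simp only [mem_filter] at hi
        simp only [Finset.mem_compl, mem_filter]
        exact fun hc => hi.2 hc.2
      · have := Finset.card_filter_add_card_filter_not (s := s) p
        omega
    · intro q hq
      simp only [mem_product, mem_powersetCard] at hq
      have hdisj : Disjoint q.1 q.2 := by
        refine Finset.disjoint_left.2 fun a ha hb => ?_
        have h1 := hq.1.1 ha
        have h2 := hq.2.1 hb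
        simp only [Finset.mem_compl] at h2
        exact h2 h1
      have hq1 : q.1.filter p = q.1 := by
        refine Finset.filter_true_of_mem fun a ha => ?_
        have := hq.1.1 ha; simp only [mem_filter] at this; exact this.2
      have hq2 : q.2.filter p = ∅ := by
        refine Finset.filter_false_of_mem fun a ha => ?_
        have := hq.2.1 ha
        simp only [Finset.mem_compl, mem_filter, mem_univ, true_and] at this
        exact this
      simp only [mem_filter, mem_powersetCard_univ]
      constructor
      · rw [Finset.card_union_of_disjoint hdisj, hq.1.2, hq.2.2]; omega
      · rw [Finset.filter_union, hq1, hq2, Finset.union_empty, hq.1.2]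
    · intro s _
      exact Finset.filter_union_filter_not_eq (p := p) s
    · intro q hq
      simp only [mem_product, mem_powersetCard] at hq
      have hq1 : q.1.filter p = q.1 := by
        refine Finset.filter_true_of_mem fun a ha => ?_
        have := hq.1.1 ha; simp only [mem_filter] at this; exact this.2
      have hq2 : q.2.filter p = ∅ := by
        refine Finset.filter_false_of_mem fun a ha => ?_
        have := hq.2.1 ha
        simp only [Finset.mem_compl, mem_filter, mem_univ, true_and] at this
        exact this
      have hq1' : q.1.filter (fun i => ¬ p i) = ∅ := by
        refine Finset.filter_false_of_mem fun a ha => ?_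
        have := hq.1.1 ha; simp only [mem_filter] at this
        exact fun hc => hc this.2
      have hq2' : q.2.filter (fun i => ¬ p i) = q.2 := by
        refine Finset.filter_true_of_mem fun a ha => ?_
        have := hq.2.1 ha
        simp only [Finset.mem_compl, mem_filter, mem_univ, true_and] at this
        exact this
      rw [Finset.filter_union, Finset.filter_union, hq1, hq2, hq1', hq2',
        Finset.union_empty, Finset.empty_union]
  rw [key, Finset.card_product, Finset.card_powersetCard, Finset.card_powersetCard,
    Finset.card_compl, Fintype.card_fin]

lemma card_bad {n : ℕ} (f : Fin n → Option Bool) :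
    (univ.filter fun c : Clause3 n => badC f c).card
      = ∑ j ∈ range 4,
          (freeCount f).choose j * (n - freeCount f).choose (3 - j) * 2 ^ j := by
  have hs : (univ.filter fun c : Clause3 n => badC f c)
      = univ.sigma (fun a : {s : Finset (Fin n) // s.card = 3} =>
          univ.filter fun b : ({ i : Fin n // i ∈ a.val } → Bool) =>
            ∀ i : { i : Fin n // i ∈ a.val }, f i.val = none ∨ f i.val = some (b i)) := by
    ext ⟨a, b⟩
    simp [badC, Finset.mem_sigma]
  rw [hs, Finset.card_sigma]
  have h2 : ∀ a : {s : Finset (Fin n) // s.card = 3},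
      (univ.filter fun b : ({ i : Fin n // i ∈ a.val } → Bool) =>
        ∀ i : { i : Fin n // i ∈ a.val }, f i.val = none ∨ f i.val = some (b i)).card
      = 2 ^ (a.val.filter fun i => f i = none).card :=
    fun a => card_patterns f a.val
  rw [Finset.sum_congr rfl fun a _ => h2 a]
  rw [← Finset.sum_subtype (powersetCard 3 (univ : Finset (Fin n)))
      (fun s => Finset.mem_powersetCard_univ)
      (fun s => 2 ^ (s.filter fun i => f i = none).card)]
  rw [← Finset.sum_fiberwise_of_maps_to (g := fun s => (s.filter fun i => f i = none).card)
      (t := range 4) (fun s hs' => by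
        simp only [Finset.mem_range]
        have h1 : (s.filter fun i => f i = none).card ≤ s.card := Finset.card_filter_le _ _
        have h3 : s.card = 3 := Finset.mem_powersetCard_univ.1 hs'
        omega)]
  refine Finset.sum_congr rfl fun j hj => ?_
  have hj3 : j ≤ 3 := by simp only [Finset.mem_range] at hj; omega
  have : ∀ s ∈ (powersetCard 3 (univ : Finset (Fin n))).filter
      (fun s => (s.filter fun i => f i = none).card = j),
      (2 : ℕ) ^ (s.filter fun i => f i = none).card = 2 ^ j := by
    intro s hs'
    simp only [Finset.mem_filter] at hs'
    rw [hs'.2]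
  rw [Finset.sum_congr rfl this, Finset.sum_const, smul_eq_mul]
  congr 1
  convert card_fiber (fun i => f i = none) j hj3 using 2 <;>
    · try unfold freeCount
      congr!

lemma card_clause3 (n : ℕ) : Fintype.card (Clause3 n) = Nat.choose n 3 * 8 := by
  rw [Fintype.card_sigma]
  have h8 : ∀ a : {s : Finset (Fin n) // s.card = 3},
      Fintype.card ({ i : Fin n // i ∈ a.val } → Bool) = 8 := by
    intro a
    rw [Fintype.card_fun, Fintype.card_coe, a.2, Fintype.card_bool]; norm_num
  rw [Finset.sum_congr rfl fun a _ => h8 a, Finset.sum_const, smul_eq_mul]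
  congr 1
  rw [Finset.card_univ, Fintype.card_subtype]
  have : (univ.filter fun s : Finset (Fin n) => s.card = 3) = powersetCard 3 univ := by
    ext s; simp [Finset.mem_powersetCard_univ]
  rw [this, Finset.card_powersetCard, Finset.card_univ, Fintype.card_fin]

/-- If `m` 3-clauses on `n` variables are drawn independently and uniformly at random,
the probability that every vertex of a fixed axis-aligned `k`-subcube satisfies all
`m` clauses equals `(1 − q_{k,n})^m`.  (The probability is expressed as the fraction of
tuples of `m` clauses with this property among all such tuples.) -/
theorem subcube_survival_probability (n k m : ℕ) (hn : 3 ≤ n) (hk : k ≤ n)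
    (f : Fin n → Option Bool) (hf : freeCount f = k) :
    ((Finset.univ.filter fun cs : Fin m → Clause3 n =>
        ∀ x, isVertex f x → ∀ j, ¬ falsifies x (cs j)).card : ℝ) /
      (Fintype.card (Fin m → Clause3 n) : ℝ) = (1 - qkn n k) ^ m := by
  classical
  set B := (univ.filter fun c : Clause3 n => badC f c) with hB
  have hswap : ∀ cs : Fin m → Clause3 n,
      (∀ x, isVertex f x → ∀ j, ¬ falsifies x (cs j)) ↔ ∀ j, ¬ badC f (cs j) := by
    intro cs
    constructor
    · intro h j hb
      obtain ⟨x, hv, hfal⟩ := (bad_iff f (cs j)).2 hb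
      exact h x hv j hfal
    · intro h x hv j hfal
      exact h j ((bad_iff f (cs j)).1 ⟨x, hv, hfal⟩)
  have hfilter : (univ.filter fun cs : Fin m → Clause3 n =>
        ∀ x, isVertex f x → ∀ j, ¬ falsifies x (cs j))
      = Fintype.piFinset (fun _ : Fin m => univ.filter fun c => ¬ badC f c) := by
    ext cs
    simp only [Finset.mem_filter, Finset.mem_univ, true_and, Fintype.mem_piFinset]
    exact hswap cs
  rw [hfilter, Fintype.card_piFinset, Finset.prod_const, Finset.card_univ, Fintype.card_fin]
  have hcard_fun : Fintype.card (Fin m → Clause3 n) = (Fintype.card (Clause3 n)) ^ m := by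
    rw [Fintype.card_fun, Fintype.card_fin]
  rw [hcard_fun]
  push_cast
  rw [← div_pow]
  congr 1
  -- now: good / total = 1 - qkn n k
  have hGB : (univ.filter fun c : Clause3 n => ¬ badC f c) = univ \ B := by
    rw [hB, Finset.filter_not]
  have hBle : B.card ≤ Fintype.card (Clause3 n) := by
    rw [← Finset.card_univ]; exact Finset.card_filter_le _ _
  have hGcard : (univ.filter fun c : Clause3 n => ¬ badC f c).card
      = Fintype.card (Clause3 n) - B.card := by
    rw [hGB, Finset.card_sdiff_of_subset (Finset.filter_subset _ _), Finset.card_univ]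
  rw [hGcard]
  have hT : Fintype.card (Clause3 n) = Nat.choose n 3 * 8 := card_clause3 n
  have hBcard : B.card = ∑ j ∈ range 4,
      k.choose j * (n - k).choose (3 - j) * 2 ^ j := by
    rw [hB, card_bad f, hf]
  have hN : (0 : ℝ) < (Nat.choose n 3 : ℝ) := by
    exact_mod_cast Nat.choose_pos hn
  have key : (∑ j ∈ range 4, (k.choose j : ℝ) * ((n - k).choose (3 - j) : ℝ) * 2 ^ j)
      = 8 * ∑ t ∈ range 4,
          ((n - k).choose t : ℝ) * (k.choose (3 - t) : ℝ) * (2 : ℝ)⁻¹ ^ t := by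
    rw [Finset.mul_sum, ← Finset.sum_range_reflect
      (fun t => 8 * (((n - k).choose t : ℝ) * (k.choose (3 - t) : ℝ) * (2 : ℝ)⁻¹ ^ t)) 4]
    refine Finset.sum_congr rfl fun j hj => ?_
    simp only [Finset.mem_range] at hj
    interval_cases j <;> norm_num <;> ring
  rw [Nat.cast_sub hBle, hBcard, hT, qkn]
  push_cast
  rw [key]
  field_simp
end

section
/- Fix γ ∈ (0,1) and α > 0, and for each n ≥ 3 set k_n = ⌊γ·n⌋ and m_n = ⌊α·n⌋. Then (1/n) · ln( C(n,k_n) · 2^{n−k_n} · (1 − q_{k_n,n})^{m_n} ) converges, as n → ∞, to H(γ) + (1−γ)·ln 2 + α·ln(1 − q(γ)), where H(γ) = −γ·ln γ − (1−γ)·ln(1−γ) is the binary entropy and q(γ) = Σ_{t=0}^{3} C(3,t)·(1−γ)^t·γ^{3−t}·2^{−t} (note q(γ) < 1). (Exponential growth rate of the expected number of surviving k-cubes in random 3-SAT.) -/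
open Filter

/-- `q(γ) = Σ_{t=0}^{3} C(3,t)·(1−γ)^t·γ^(3−t)·2^{−t}`. -/
noncomputable def qlim (γ : ℝ) : ℝ :=
  ∑ t ∈ Finset.range 4,
    (Nat.choose 3 t : ℝ) * (1 - γ) ^ t * γ ^ (3 - t) * (2 : ℝ)⁻¹ ^ t

/- ### Auxiliary lemmas -/

/-- floor ratio tends to the constant -/
lemma aux_floor_ratio (c : ℝ) (hc : 0 ≤ c) :
    Tendsto (fun n : ℕ => (⌊c * (n : ℝ)⌋₊ : ℝ) / n) atTop (nhds c) := by
  have h1 : Tendsto (fun n : ℕ => c - 1 / (n : ℝ)) atTop (nhds c) := by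
    simpa using tendsto_const_nhds.sub (tendsto_one_div_atTop_nhds_zero_nat (𝕜 := ℝ))
  refine tendsto_of_tendsto_of_tendsto_of_le_of_le' h1 tendsto_const_nhds ?_ ?_
  · filter_upwards [eventually_gt_atTop 0] with n hn
    have hn' : (0:ℝ) < n := by exact_mod_cast hn
    rw [sub_le_iff_le_add, ← add_div, le_div_iff₀ hn']
    exact (Nat.lt_floor_add_one (c * (n:ℝ))).le
  · filter_upwards [eventually_gt_atTop 0] with n hn
    have hn' : (0:ℝ) < n := by exact_mod_cast hn
    rw [div_le_iff₀ hn']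
    calc (⌊c * (n : ℝ)⌋₊ : ℝ) ≤ c * n := Nat.floor_le (by positivity)
    _ = c * n := rfl

/-- cast of binomial coefficient as a product -/
lemma aux_choose_cast (a r : ℕ) (h : r ≤ a) :
    (a.choose r : ℝ) = (∏ i ∈ Finset.range r, ((a : ℝ) - i)) / (r.factorial : ℝ) := by
  have h1 : a.descFactorial r = r.factorial * a.choose r :=
    Nat.descFactorial_eq_factorial_mul_choose a r
  have h2 : a.descFactorial r = ∏ i ∈ Finset.range r, (a - i) :=
    Nat.descFactorial_eq_prod_range a r
  have h3 : ((∏ i ∈ Finset.range r, (a - i) : ℕ) : ℝ)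
      = ∏ i ∈ Finset.range r, ((a : ℝ) - i) := by
    push_cast
    refine Finset.prod_congr rfl fun i hi => ?_
    rw [Nat.cast_sub (le_trans (Finset.mem_range.mp hi).le h)]
  have h4 : (r.factorial : ℝ) * (a.choose r : ℝ) = ∏ i ∈ Finset.range r, ((a : ℝ) - i) := by
    rw [← h3, ← Nat.cast_mul, ← h1, h2]
  have hf : (r.factorial : ℝ) ≠ 0 := by positivity
  field_simp [hf]
  linarith [h4]

/-- choose ratio limit -/
lemma aux_choose_tendsto (r : ℕ) (a : ℕ → ℕ) (c : ℝ)
    (h : Tendsto (fun n => (a n : ℝ) / n) atTop (nhds c))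
    (ha : Tendsto a atTop atTop) :
    Tendsto (fun n => ((a n).choose r : ℝ) / (n : ℝ) ^ r)
      atTop (nhds (c ^ r / (r.factorial : ℝ))) := by
  have hF : Tendsto (fun n : ℕ => (∏ i ∈ Finset.range r, ((a n : ℝ) / n - (i : ℝ) / n))
      / (r.factorial : ℝ)) atTop (nhds (c ^ r / (r.factorial : ℝ))) := by
    have hprod : Tendsto (fun n : ℕ => ∏ i ∈ Finset.range r, ((a n : ℝ) / n - (i : ℝ) / n))
        atTop (nhds (∏ _i ∈ Finset.range r, c)) := by
      refine tendsto_finset_prod _ fun i _ => ?_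
      have : Tendsto (fun n : ℕ => (i : ℝ) / n) atTop (nhds 0) := by
        simpa using tendsto_const_nhds.div_atTop (tendsto_natCast_atTop_atTop (R := ℝ))
      simpa using h.sub this
    rw [Finset.prod_const, Finset.card_range] at hprod
    exact hprod.div_const _
  refine hF.congr' ?_
  filter_upwards [ha.eventually (eventually_ge_atTop r), eventually_gt_atTop 0] with n har hn
  have hn' : (0:ℝ) < n := by exact_mod_cast hn
  rw [aux_choose_cast _ _ har, div_div]
  have hc : ((n:ℝ)) ^ r = ∏ _i ∈ Finset.range r, (n:ℝ) := by
    rw [Finset.prod_const, Finset.card_range]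
  have hprodeq : (∏ i ∈ Finset.range r, ((a n : ℝ)/n - (i:ℝ)/n))
      = (∏ i ∈ Finset.range r, ((a n : ℝ) - i)) / (n:ℝ)^r := by
    rw [hc, ← Finset.prod_div_distrib]
    exact Finset.prod_congr rfl fun i _ => div_sub_div_same _ _ _
  rw [hprodeq, div_div, mul_comm]


lemma aux_qlim_eq (γ : ℝ) : qlim γ = ((1 + γ) / 2) ^ 3 := by
  norm_num [qlim, Finset.sum_range_succ]
  ring

lemma aux_k_le (γ : ℝ) (hγ1 : γ < 1) (n : ℕ) : ⌊γ * (n : ℝ)⌋₊ ≤ n := by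
  rcases le_or_gt γ 0 with h | h
  · simp [Nat.floor_of_nonpos (mul_nonpos_of_nonpos_of_nonneg h (Nat.cast_nonneg n))]
  · calc ⌊γ * (n : ℝ)⌋₊ ≤ ⌊(n : ℝ)⌋₊ :=
        Nat.floor_le_floor (by nlinarith [Nat.cast_nonneg (α := ℝ) n])
      _ = n := Nat.floor_natCast n

lemma aux_k_atTop (γ : ℝ) (hγ0 : 0 < γ) :
    Tendsto (fun n : ℕ => ⌊γ * (n : ℝ)⌋₊) atTop atTop :=
  tendsto_nat_floor_atTop.comp ((tendsto_natCast_atTop_atTop (R := ℝ)).const_mul_atTop hγ0)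

lemma aux_nk_cast (γ : ℝ) (hγ1 : γ < 1) (n : ℕ) :
    ((n - ⌊γ * (n : ℝ)⌋₊ : ℕ) : ℝ) = (n : ℝ) - (⌊γ * (n : ℝ)⌋₊ : ℝ) := by
  rw [Nat.cast_sub (aux_k_le γ hγ1 n)]

lemma aux_nk_ratio (γ : ℝ) (hγ0 : 0 < γ) (hγ1 : γ < 1) :
    Tendsto (fun n : ℕ => ((n - ⌊γ * (n : ℝ)⌋₊ : ℕ) : ℝ) / n) atTop (nhds (1 - γ)) := by
  have h := aux_floor_ratio γ hγ0.le
  have h1 : Tendsto (fun n : ℕ => 1 - (⌊γ * (n : ℝ)⌋₊ : ℝ) / n) atTop (nhds (1 - γ)) :=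
    tendsto_const_nhds.sub h
  refine h1.congr' ?_
  filter_upwards [eventually_gt_atTop 0] with n hn
  have hn' : (0:ℝ) < n := by exact_mod_cast hn
  rw [aux_nk_cast γ hγ1, sub_div, div_self hn'.ne']

lemma aux_nk_atTop (γ : ℝ) (hγ0 : 0 < γ) (hγ1 : γ < 1) :
    Tendsto (fun n : ℕ => n - ⌊γ * (n : ℝ)⌋₊) atTop atTop := by
  rw [← tendsto_natCast_atTop_iff (R := ℝ)]
  refine tendsto_atTop_mono' _ ?_
    ((tendsto_natCast_atTop_atTop (R := ℝ)).const_mul_atTop (by linarith : (0:ℝ) < 1 - γ))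
  filter_upwards [] with n
  rw [aux_nk_cast γ hγ1]
  have := Nat.floor_le (by positivity : (0:ℝ) ≤ γ * n)
  nlinarith [Nat.cast_nonneg (α := ℝ) n]

lemma aux_q_tendsto (γ : ℝ) (hγ0 : 0 < γ) (hγ1 : γ < 1) :
    Tendsto (fun n : ℕ => qkn n ⌊γ * (n : ℝ)⌋₊) atTop (nhds (qlim γ)) := by
  set k : ℕ → ℕ := fun n => ⌊γ * (n : ℝ)⌋₊ with hk
  have hA : ∀ t : ℕ, Tendsto (fun n : ℕ => (((n - k n).choose t : ℝ)) / (n : ℝ) ^ t)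
      atTop (nhds ((1 - γ) ^ t / (t.factorial : ℝ))) := fun t =>
    aux_choose_tendsto t _ _ (aux_nk_ratio γ hγ0 hγ1) (aux_nk_atTop γ hγ0 hγ1)
  have hB : ∀ t : ℕ, Tendsto (fun n : ℕ => (((k n).choose t : ℝ)) / (n : ℝ) ^ t)
      atTop (nhds (γ ^ t / (t.factorial : ℝ))) := fun t =>
    aux_choose_tendsto t _ _ (aux_floor_ratio γ hγ0.le) (aux_k_atTop γ hγ0)
  have hD : Tendsto (fun n : ℕ => ((n.choose 3 : ℝ)) / (n : ℝ) ^ 3)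
      atTop (nhds ((1:ℝ) ^ 3 / ((3:ℕ).factorial : ℝ))) := by
    refine aux_choose_tendsto 3 id 1 ?_ tendsto_id
    refine tendsto_const_nhds.congr' ?_
    filter_upwards [eventually_gt_atTop 0] with n hn
    have hn' : (0:ℝ) < n := by exact_mod_cast hn
    simp [div_self hn'.ne']
  have hnum : Tendsto (fun n : ℕ => ∑ t ∈ Finset.range 4,
      (((n - k n).choose t : ℝ) / (n : ℝ) ^ t) * (((k n).choose (3 - t) : ℝ) / (n : ℝ) ^ (3 - t))
        * (2:ℝ)⁻¹ ^ t) atTop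
      (nhds (∑ t ∈ Finset.range 4,
        ((1 - γ) ^ t / (t.factorial : ℝ)) * (γ ^ (3 - t) / ((3 - t).factorial : ℝ))
          * (2:ℝ)⁻¹ ^ t)) := by
    refine tendsto_finset_sum _ fun t _ => ?_
    exact ((hA t).mul (hB (3 - t))).mul tendsto_const_nhds
  have hS : Tendsto (fun n : ℕ => (∑ t ∈ Finset.range 4,
      (((n - k n).choose t : ℝ) / (n : ℝ) ^ t) * (((k n).choose (3 - t) : ℝ) / (n : ℝ) ^ (3 - t))
        * (2:ℝ)⁻¹ ^ t) / ((n.choose 3 : ℝ) / (n : ℝ) ^ 3)) atTop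
      (nhds ((∑ t ∈ Finset.range 4,
        ((1 - γ) ^ t / (t.factorial : ℝ)) * (γ ^ (3 - t) / ((3 - t).factorial : ℝ))
          * (2:ℝ)⁻¹ ^ t) / ((1:ℝ) ^ 3 / ((3:ℕ).factorial : ℝ)))) :=
    hnum.div hD (by norm_num [Nat.factorial])
  have hval : (∑ t ∈ Finset.range 4,
        ((1 - γ) ^ t / (t.factorial : ℝ)) * (γ ^ (3 - t) / ((3 - t).factorial : ℝ))
          * (2:ℝ)⁻¹ ^ t) / ((1:ℝ) ^ 3 / ((3:ℕ).factorial : ℝ)) = qlim γ := by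
    norm_num [qlim, Finset.sum_range_succ, Nat.factorial]
    ring
  rw [hval] at hS
  refine hS.congr' ?_
  filter_upwards [eventually_ge_atTop 3] with n hn
  have hn' : (0:ℝ) < n := by exact_mod_cast (by omega : 0 < n)
  have hch : (0:ℝ) < (n.choose 3 : ℝ) := by
    exact_mod_cast Nat.choose_pos (by omega : 3 ≤ n)
  have hsum : (∑ t ∈ Finset.range 4,
      (((n - k n).choose t : ℝ) / (n : ℝ) ^ t) * (((k n).choose (3 - t) : ℝ) / (n : ℝ) ^ (3 - t))
        * (2:ℝ)⁻¹ ^ t)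
      = (∑ t ∈ Finset.range 4,
        ((n - k n).choose t : ℝ) * ((k n).choose (3 - t) : ℝ) * (2:ℝ)⁻¹ ^ t) / (n : ℝ) ^ 3 := by
    rw [Finset.sum_div]
    refine Finset.sum_congr rfl fun t ht => ?_
    have h3 : t + (3 - t) = 3 := by
      have := Finset.mem_range.mp ht; omega
    rw [div_mul_div_comm, ← pow_add, h3, div_mul_eq_mul_div]
  rw [hsum, qkn, div_div_div_cancel_right₀]
  positivity


lemma aux_log_factorial :
    Tendsto (fun n : ℕ => (Real.log (n.factorial : ℝ) - ((n:ℝ) * Real.log n - n)) / n)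
      atTop (nhds 0) := by
  have hπ := Real.pi_pos
  set D : ℕ → ℝ := fun n => Real.sqrt (2 * n * Real.pi) * ((n:ℝ) / Real.exp 1) ^ n with hD
  have hne : ∀ᶠ n : ℕ in atTop, D n ≠ 0 := by
    filter_upwards [eventually_gt_atTop 0] with n hn
    have hn' : (0:ℝ) < n := by exact_mod_cast hn
    positivity
  have hr : Tendsto (fun n : ℕ => (n.factorial : ℝ) / D n) atTop (nhds 1) :=
    (Asymptotics.isEquivalent_iff_tendsto_one hne).mp Stirling.factorial_isEquivalent_stirling
  have hlogr : Tendsto (fun n : ℕ => Real.log ((n.factorial : ℝ) / D n)) atTop (nhds 0) := by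
    have := (Real.continuousAt_log one_ne_zero).tendsto.comp hr
    simpa [Function.comp_def] using this
  have hlogn : Tendsto (fun n : ℕ => Real.log n / n) atTop (nhds 0) := by
    have h := Real.isLittleO_log_id_atTop.tendsto_div_nhds_zero
    exact h.comp (tendsto_natCast_atTop_atTop (R := ℝ))
  have h1 : Tendsto (fun n : ℕ => Real.log ((n.factorial : ℝ) / D n) / n) atTop (nhds 0) :=
    hlogr.div_atTop (tendsto_natCast_atTop_atTop (R := ℝ))
  have h2 : Tendsto (fun n : ℕ => (Real.log (2 * Real.pi) / n + Real.log n / n) / 2)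
      atTop (nhds 0) := by
    have hc : Tendsto (fun n : ℕ => Real.log (2 * Real.pi) / n) atTop (nhds 0) :=
      tendsto_const_nhds.div_atTop (tendsto_natCast_atTop_atTop (R := ℝ))
    simpa using (hc.add hlogn).div_const 2
  have h3 := h1.add h2
  rw [add_zero] at h3
  refine h3.congr' ?_
  filter_upwards [eventually_gt_atTop 0] with n hn
  have hn' : (0:ℝ) < n := by exact_mod_cast hn
  have hfac : (0:ℝ) < (n.factorial : ℝ) := by exact_mod_cast n.factorial_pos
  have hs : (0:ℝ) < Real.sqrt (2 * n * Real.pi) := Real.sqrt_pos.mpr (by positivity)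
  have hp : (0:ℝ) < ((n:ℝ) / Real.exp 1) ^ n := by positivity
  have hlogs : Real.log (Real.sqrt (2 * n * Real.pi))
      = (Real.log (2*Real.pi) + Real.log n)/2 := by
    rw [Real.log_sqrt (by positivity)]
    congr 1
    rw [show (2:ℝ) * n * Real.pi = (2*Real.pi) * n by ring,
      Real.log_mul (by positivity) hn'.ne']
  have hDpos : (0:ℝ) < D n := mul_pos hs hp
  have hlogD : Real.log (D n)
      = (Real.log (2*Real.pi) + Real.log n)/2 + (n:ℝ) * (Real.log n - 1) := by
    rw [hD]
    dsimp only
    rw [Real.log_mul hs.ne' hp.ne', Real.log_pow, Real.log_div hn'.ne' (Real.exp_ne_zero 1),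
      Real.log_exp, hlogs]
  rw [Real.log_div hfac.ne' hDpos.ne', hlogD]
  field_simp
  ring


/-- Exponential growth rate of the expected number of surviving `k`-cubes in random
3-SAT: for `γ ∈ (0,1)`, `α > 0`, `k_n = ⌊γ·n⌋` and `m_n = ⌊α·n⌋`,
`(1/n)·ln(C(n,k_n)·2^(n−k_n)·(1 − q_{k_n,n})^{m_n})` converges to
`H(γ) + (1−γ)·ln 2 + α·ln(1 − q(γ))`, where `H` is the binary entropy. -/
theorem expected_cube_count_growth_rate (γ α : ℝ) (hγ0 : 0 < γ) (hγ1 : γ < 1)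
    (hα : 0 < α) :
    Tendsto
      (fun n : ℕ =>
        (1 / (n : ℝ)) *
          Real.log ((Nat.choose n ⌊γ * (n : ℝ)⌋₊ : ℝ) *
            2 ^ (n - ⌊γ * (n : ℝ)⌋₊) *
            (1 - qkn n ⌊γ * (n : ℝ)⌋₊) ^ ⌊α * (n : ℝ)⌋₊))
      atTop
      (nhds ((-γ * Real.log γ - (1 - γ) * Real.log (1 - γ)) +
        (1 - γ) * Real.log 2 + α * Real.log (1 - qlim γ))) := by
  have hkr : Tendsto (fun n : ℕ => (⌊γ * (n:ℝ)⌋₊ : ℝ)/n) atTop (nhds γ) :=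
    aux_floor_ratio γ hγ0.le
  have hnkr := aux_nk_ratio γ hγ0 hγ1
  have hq := aux_q_tendsto γ hγ0 hγ1
  have hql1 : qlim γ < 1 := by
    rw [aux_qlim_eq]
    exact pow_lt_one₀ (by linarith) (by linarith) (by norm_num)
  have hqpos : (0:ℝ) < 1 - qlim γ := by linarith
  -- part 3
  have hlogq : Tendsto (fun n : ℕ => Real.log (1 - qkn n ⌊γ * (n:ℝ)⌋₊)) atTop
      (nhds (Real.log (1 - qlim γ))) :=
    ((Real.continuousAt_log hqpos.ne').tendsto).comp (tendsto_const_nhds.sub hq)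
  have hf3 : Tendsto (fun n : ℕ => ((⌊α * (n:ℝ)⌋₊ : ℝ)/n) * Real.log (1 - qkn n ⌊γ * (n:ℝ)⌋₊))
      atTop (nhds (α * Real.log (1 - qlim γ))) := (aux_floor_ratio α hα.le).mul hlogq
  -- part 2
  have hf2 : Tendsto (fun n : ℕ => (((n - ⌊γ * (n:ℝ)⌋₊ : ℕ)):ℝ)/n * Real.log 2) atTop
      (nhds ((1-γ) * Real.log 2)) := hnkr.mul_const _
  -- part 1
  have hg := aux_log_factorial
  have hgk : Tendsto (fun n : ℕ =>
      (Real.log ((⌊γ * (n:ℝ)⌋₊).factorial : ℝ)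
        - ((⌊γ * (n:ℝ)⌋₊:ℝ) * Real.log (⌊γ * (n:ℝ)⌋₊:ℝ) - (⌊γ * (n:ℝ)⌋₊:ℝ))) / n)
      atTop (nhds 0) := by
    have h1 := (hg.comp (aux_k_atTop γ hγ0)).mul hkr
    rw [zero_mul] at h1
    refine h1.congr' ?_
    filter_upwards [(aux_k_atTop γ hγ0).eventually (eventually_gt_atTop 0)] with n hn
    have hne : ((⌊γ * (n:ℝ)⌋₊:ℝ)) ≠ 0 := by
      exact_mod_cast hn.ne'
    show _ / _ * _ = _
    field_simp
  have hgnk : Tendsto (fun n : ℕ =>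
      (Real.log (((n - ⌊γ * (n:ℝ)⌋₊ : ℕ)).factorial : ℝ)
        - (((n - ⌊γ * (n:ℝ)⌋₊ : ℕ):ℝ) * Real.log ((n - ⌊γ * (n:ℝ)⌋₊ : ℕ):ℝ)
          - ((n - ⌊γ * (n:ℝ)⌋₊ : ℕ):ℝ))) / n)
      atTop (nhds 0) := by
    have h1 := (hg.comp (aux_nk_atTop γ hγ0 hγ1)).mul hnkr
    rw [zero_mul] at h1
    refine h1.congr' ?_
    filter_upwards [(aux_nk_atTop γ hγ0 hγ1).eventually (eventually_gt_atTop 0)] with n hn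
    have hne : (((n - ⌊γ * (n:ℝ)⌋₊ : ℕ)):ℝ) ≠ 0 := by
      exact_mod_cast hn.ne'
    show _ / _ * _ = _
    field_simp
  have hE : Tendsto (fun n : ℕ =>
      -((⌊γ * (n:ℝ)⌋₊:ℝ)/n) * Real.log ((⌊γ * (n:ℝ)⌋₊:ℝ)/n)
        - (1 - (⌊γ * (n:ℝ)⌋₊:ℝ)/n) * Real.log (1 - (⌊γ * (n:ℝ)⌋₊:ℝ)/n)) atTop
      (nhds (-γ * Real.log γ - (1-γ) * Real.log (1-γ))) := by
    have hc : ContinuousAt (fun x : ℝ => -x * Real.log x - (1-x) * Real.log (1-x)) γ := by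
      have l1 : ContinuousAt Real.log γ := Real.continuousAt_log hγ0.ne'
      have l2 : ContinuousAt (fun x : ℝ => Real.log (1 - x)) γ :=
        (Real.continuousAt_log (by intro h; linarith [sub_eq_zero.mp h] : (1:ℝ) - γ ≠ 0)).comp
          (continuousAt_const.sub continuousAt_id)
      exact (continuousAt_id.neg.mul l1).sub ((continuousAt_const.sub continuousAt_id).mul l2)
    exact hc.tendsto.comp hkr
  have hf1 : Tendsto (fun n : ℕ => (1/(n:ℝ)) * Real.log ((n.choose ⌊γ * (n:ℝ)⌋₊ : ℝ))) atTop
      (nhds (-γ * Real.log γ - (1-γ) * Real.log (1-γ))) := by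
    have h := ((hE.add hg).sub hgk).sub hgnk
    rw [add_zero, sub_zero, sub_zero] at h
    refine h.congr' ?_
    filter_upwards [(aux_k_atTop γ hγ0).eventually (eventually_gt_atTop 0),
      (aux_nk_atTop γ hγ0 hγ1).eventually (eventually_gt_atTop 0),
      eventually_gt_atTop 0] with n hk1 hnk1 hn1
    have hkn : ⌊γ * (n:ℝ)⌋₊ ≤ n := aux_k_le γ hγ1 n
    have hN : (0:ℝ) < (n:ℝ) := by exact_mod_cast hn1
    have hK : (0:ℝ) < ((⌊γ * (n:ℝ)⌋₊:ℕ):ℝ) := by exact_mod_cast hk1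
    have hM : (0:ℝ) < (((n - ⌊γ * (n:ℝ)⌋₊ : ℕ)):ℝ) := by exact_mod_cast hnk1
    have hMsub : (((n - ⌊γ * (n:ℝ)⌋₊ : ℕ)):ℝ) = (n:ℝ) - (⌊γ * (n:ℝ)⌋₊:ℝ) :=
      aux_nk_cast γ hγ1 n
    have hCpos : (0:ℝ) < (n.choose ⌊γ * (n:ℝ)⌋₊ : ℝ) := by
      exact_mod_cast Nat.choose_pos hkn
    have hKf : (0:ℝ) < ((⌊γ * (n:ℝ)⌋₊).factorial : ℝ) := by
      exact_mod_cast Nat.factorial_pos _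
    have hMf : (0:ℝ) < ((n - ⌊γ * (n:ℝ)⌋₊ : ℕ).factorial : ℝ) := by
      exact_mod_cast Nat.factorial_pos _
    have hfact : (n.choose ⌊γ * (n:ℝ)⌋₊ : ℝ) * ((⌊γ * (n:ℝ)⌋₊).factorial : ℝ)
        * ((n - ⌊γ * (n:ℝ)⌋₊ : ℕ).factorial : ℝ) = (n.factorial : ℝ) := by
      exact_mod_cast congrArg (Nat.cast (R := ℝ)) (Nat.choose_mul_factorial_mul_factorial hkn)
    have hlogC : Real.log (n.choose ⌊γ * (n:ℝ)⌋₊ : ℝ)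
        = Real.log (n.factorial : ℝ) - Real.log ((⌊γ * (n:ℝ)⌋₊).factorial : ℝ)
          - Real.log ((n - ⌊γ * (n:ℝ)⌋₊ : ℕ).factorial : ℝ) := by
      rw [← hfact, Real.log_mul (by positivity) hMf.ne', Real.log_mul hCpos.ne' hKf.ne']
      ring
    have e1 : Real.log ((⌊γ * (n:ℝ)⌋₊:ℝ)/n)
        = Real.log (⌊γ * (n:ℝ)⌋₊:ℝ) - Real.log (n:ℝ) := Real.log_div hK.ne' hN.ne'
    have e2 : (1:ℝ) - (⌊γ * (n:ℝ)⌋₊:ℝ)/n = (((n - ⌊γ * (n:ℝ)⌋₊ : ℕ)):ℝ)/n := by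
      rw [hMsub]
      field_simp
    have e3 : Real.log ((((n - ⌊γ * (n:ℝ)⌋₊ : ℕ)):ℝ)/n)
        = Real.log (((n - ⌊γ * (n:ℝ)⌋₊ : ℕ)):ℝ) - Real.log (n:ℝ) := Real.log_div hM.ne' hN.ne'
    show _ = _
    rw [e2, e1, e3, hlogC, hMsub]
    field_simp
    ring
  -- assembly
  have htot := (hf1.add hf2).add hf3
  refine htot.congr' ?_
  filter_upwards [eventually_gt_atTop 0, hq.eventually_lt_const hql1] with n hn1 hqlt
  have hN : (0:ℝ) < (n:ℝ) := by exact_mod_cast hn1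
  have hkn : ⌊γ * (n:ℝ)⌋₊ ≤ n := aux_k_le γ hγ1 n
  have hCpos : (0:ℝ) < (n.choose ⌊γ * (n:ℝ)⌋₊ : ℝ) := by
    exact_mod_cast Nat.choose_pos hkn
  have h2pos : (0:ℝ) < (2:ℝ) ^ (n - ⌊γ * (n:ℝ)⌋₊) := by positivity
  have hqp : (0:ℝ) < 1 - qkn n ⌊γ * (n:ℝ)⌋₊ := by linarith
  have hqpow : (0:ℝ) < (1 - qkn n ⌊γ * (n:ℝ)⌋₊) ^ ⌊α * (n:ℝ)⌋₊ := by positivity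
  show _ = _
  rw [Real.log_mul (by positivity) hqpow.ne', Real.log_mul hCpos.ne' h2pos.ne',
    Real.log_pow, Real.log_pow]
  field_simp
end
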